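/- arXiv:2505.02736 — 3 statements merged into one kernel-verified Lean document; each statement's English description precedes it below -/
import Mathlib

section
/- Let n be an odd positive integer. Then the improper strong odd chromatic number of the complete graph K_n equals n, i.e., every (not necessarily proper) vertex-coloring of K_n such that for each vertex v and each color c the number of neighbors of v with color c is zero or odd must use n distinct colors. -/
open Finset

attribute [local instance] Classical.propDecidable

/-- The number of neighbors of `v` in `G` having color `c` under `φ`. -/
noncomputable def colorCount {V : Type*} [Fintype V] (G : SimpleGraph V) {α : Type*}
    (φ : V → α) (v : V) (c : α) : ℕ :=
  (Finset.univ.filter (fun u => G.Adj v u ∧ φ u = c)).card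

/-- An improper strong odd coloring: not necessarily proper, but every color appears in
every neighborhood zero or an odd number of times. -/
def IsImproperStrongOdd {V : Type*} [Fintype V] (G : SimpleGraph V) {α : Type*}
    (φ : V → α) : Prop :=
  ∀ (v : V) (c : α), colorCount G φ v c = 0 ∨ Odd (colorCount G φ v c)

/-- The improper strong odd chromatic number. -/
noncomputable def isoChromNum {V : Type*} [Fintype V] (G : SimpleGraph V) : ℕ :=
  sInf {t | ∃ φ : V → Fin t, IsImproperStrongOdd G φ}

lemma iso_injective {n : ℕ} (hn : Odd n) {α : Type*} (φ : Fin n → α)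
    (h : IsImproperStrongOdd (⊤ : SimpleGraph (Fin n)) φ) : Function.Injective φ := by
  intro u w huw
  by_contra hne
  set c := φ u with hc
  set S := Finset.univ.filter (fun x => φ x = c) with hS
  have hu : u ∈ S := by simp [hS, hc]
  have hw : w ∈ S := by simp [hS, ← huw]
  have h2 : 1 < S.card := Finset.one_lt_card.mpr ⟨u, hu, w, hw, hne⟩
  have hcount : ∀ v : Fin n, colorCount ⊤ φ v c = (S.erase v).card := by
    intro v
    unfold colorCount
    congr 1
    ext x
    simp only [hS, Finset.mem_filter, Finset.mem_erase, Finset.mem_univ, true_and,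
      SimpleGraph.top_adj]
    constructor
    · rintro ⟨h1, h2'⟩; exact ⟨fun e => h1 e.symm, h2'⟩
    · rintro ⟨h1, h2'⟩; exact ⟨fun e => h1 e.symm, h2'⟩
  have hcu : colorCount ⊤ φ u c = S.card - 1 := by
    rw [hcount, Finset.card_erase_of_mem hu]
  have hodd : Odd (S.card - 1) := by
    rcases h u c with h0 | h0
    · rw [hcu] at h0; omega
    · rwa [hcu] at h0
  have heven : Even S.card := by
    obtain ⟨k, hk⟩ := hodd
    exact ⟨k + 1, by omega⟩
  by_cases hall : S = Finset.univ
  · have : S.card = n := by rw [hall, Finset.card_univ, Fintype.card_fin]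
    rw [this] at heven
    exact (Nat.not_even_iff_odd.mpr hn) heven
  · obtain ⟨v, hv⟩ : ∃ v, v ∉ S := by
      by_contra hcon
      push_neg at hcon
      exact hall (Finset.eq_univ_iff_forall.mpr hcon)
    have hcv : colorCount ⊤ φ v c = S.card := by
      rw [hcount, Finset.erase_eq_of_notMem hv]
    rcases h v c with h0 | h0
    · rw [hcv] at h0; omega
    · rw [hcv] at h0
      exact (Nat.not_odd_iff_even.mpr heven) h0

lemma iso_id (n : ℕ) : IsImproperStrongOdd (⊤ : SimpleGraph (Fin n)) (id : Fin n → Fin n) := by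
  intro v c
  by_cases hvc : c = v
  · left
    subst hvc
    unfold colorCount
    rw [Finset.card_eq_zero]
    ext x
    simp only [Finset.mem_filter, Finset.mem_univ, true_and, SimpleGraph.top_adj, id_eq,
      Finset.notMem_empty, iff_false, not_and]
    exact fun h e => h e.symm
  · right
    have h1 : colorCount (⊤ : SimpleGraph (Fin n)) (id : Fin n → Fin n) v c = 1 := by
      unfold colorCount
      rw [Finset.card_eq_one]
      refine ⟨c, ?_⟩
      ext x
      simp only [Finset.mem_filter, Finset.mem_univ, true_and, SimpleGraph.top_adj, id_eq,
        Finset.mem_singleton]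
      exact ⟨fun h => h.2, fun h => ⟨by rw [h]; exact fun e => hvc e.symm, h⟩⟩
    rw [h1]
    exact odd_one

/-- For odd `n`, the improper strong odd chromatic number of the complete graph `K_n`
equals `n`; indeed every improper strong odd coloring of `K_n` uses `n` distinct colors. -/
theorem isoChromNum_completeGraph (n : ℕ) (hn : Odd n) (hpos : 0 < n) :
    isoChromNum (⊤ : SimpleGraph (Fin n)) = n ∧
    ∀ φ : Fin n → ℕ, IsImproperStrongOdd (⊤ : SimpleGraph (Fin n)) φ →
      (Finset.univ.image φ).card = n := by
  constructor
  · apply le_antisymm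
    · exact Nat.sInf_le ⟨id, iso_id n⟩
    · refine le_csInf ⟨n, ⟨id, iso_id n⟩⟩ ?_
      rintro t ⟨φ, hφ⟩
      have := Fintype.card_le_of_injective φ (iso_injective hn φ hφ)
      simpa using this
  · intro φ hφ
    rw [Finset.card_image_of_injective _ (iso_injective hn φ hφ), Finset.card_univ,
      Fintype.card_fin]
end

section
/- Let G_k (for k ≥ 1) be the bipartite graph whose vertices are those of the full rooted binary tree T_k of height k, with edges joining each leaf of T_k to all of its ancestors (including the root). Then any coloring of the leaves of G_k such that every internal vertex of T_k sees each color among its leaf-descendants either an odd number of times or not at all must use at least 2^k colors. -/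
open Finset

attribute [local instance] Classical.propDecidable

/-- Leaves of the full binary tree of height `k` are functions `Fin k → Bool`; an internal
vertex at depth `i < k` is determined by a prefix, encoded as a function `ℕ → Bool` of which
only the first `i` values matter.  If the leaves are colored so that every internal vertex
sees each color among its leaf-descendants an odd number of times or not at all, then at
least `2^k` colors are used. -/
theorem binary_tree_leaf_coloring_lower_bound (k : ℕ) (hk : 1 ≤ k)
    (φ : (Fin k → Bool) → ℕ)
    (hφ : ∀ (i : ℕ), i < k → ∀ (p : ℕ → Bool) (c : ℕ),
      (Finset.univ.filter (fun f : Fin k → Bool =>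
        (∀ j : Fin k, (j : ℕ) < i → f j = p (j : ℕ)) ∧ φ f = c)).card = 0 ∨
      Odd ((Finset.univ.filter (fun f : Fin k → Bool =>
        (∀ j : Fin k, (j : ℕ) < i → f j = p (j : ℕ)) ∧ φ f = c)).card)) :
    2 ^ k ≤ (Finset.univ.image φ).card := by
  have hinj : Function.Injective φ := by
    intro f g hfg
    by_contra hne
    have hex : ∃ n, ∃ h : n < k, f ⟨n, h⟩ ≠ g ⟨n, h⟩ := by
      by_contra h
      push_neg at h
      exact hne (funext fun j => by simpa using h j j.2)
    set i := Nat.find hex with hi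
    obtain ⟨hik, hnei⟩ := Nat.find_spec hex
    have hmin : ∀ m, m < i → ∀ h : m < k, f ⟨m, h⟩ = g ⟨m, h⟩ := by
      intro m hm h
      have := Nat.find_min hex hm
      push_neg at this
      exact this h
    set c := φ f with hc
    set p : ℕ → Bool := fun n => if h : n < k then f ⟨n, h⟩ else false with hp
    set pb : Bool → ℕ → Bool := fun b n => if n = i then b else p n with hpb
    set S : ℕ → (ℕ → Bool) → Finset (Fin k → Bool) := fun m q =>
      Finset.univ.filter (fun f' : Fin k → Bool =>
        (∀ j : Fin k, (j : ℕ) < m → f' j = q (j : ℕ)) ∧ φ f' = c) with hS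
    have hφ' : ∀ m, m < k → ∀ q, (S m q).card = 0 ∨ Odd (S m q).card :=
      fun m hm q => hφ m hm q c
    -- membership in subtrees
    have hsplit : ∀ b : Bool, S (i+1) (pb b) =
        (S i p).filter (fun f' => f' ⟨i, hik⟩ = b) := by
      intro b
      ext f'
      simp only [hS, Finset.mem_filter, Finset.mem_univ, true_and]
      constructor
      · rintro ⟨h1, h2⟩
        refine ⟨⟨fun j hj => ?_, h2⟩, ?_⟩
        · have := h1 j (Nat.lt_succ_of_lt hj)
          rw [this, hpb]
          simp [Nat.ne_of_lt hj]
        · have := h1 ⟨i, hik⟩ (Nat.lt_succ_self i)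
          simpa [hpb] using this
      · rintro ⟨⟨h1, h2⟩, h3⟩
        refine ⟨fun j hj => ?_, h2⟩
        rcases Nat.lt_succ_iff_lt_or_eq.mp hj with hj' | hj'
        · rw [h1 j hj', hpb]
          simp [Nat.ne_of_lt hj']
        · have : j = ⟨i, hik⟩ := Fin.ext hj'
          rw [this, h3, hpb]
          simp
    have hcard : (S i p).card = (S (i+1) (pb false)).card + (S (i+1) (pb true)).card := by
      rw [hsplit false, hsplit true]
      have := Finset.card_filter_add_card_filter_not
        (s := S i p) (p := fun f' => f' ⟨i, hik⟩ = false)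
      rw [← this]
      congr 2
      ext x
      simp [Finset.mem_filter, Bool.not_eq_false]
    -- f is in S i p
    have hfmem : f ∈ S i p := by
      simp only [hS, Finset.mem_filter, Finset.mem_univ, true_and]
      refine ⟨fun j hj => by simp [hp, j.2], ?_⟩
      trivial
    -- g is in S i p
    have hgmem : g ∈ S i p := by
      simp only [hS, Finset.mem_filter, Finset.mem_univ, true_and]
      refine ⟨fun j hj => ?_, hfg.symm⟩
      rw [← hmin j hj j.2]
      simp [hp, j.2]
    -- both subtrees are nonempty
    have hmemb : ∀ b : Bool, (S (i+1) (pb b)).Nonempty := by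
      intro b
      by_cases hb : f ⟨i, hik⟩ = b
      · exact ⟨f, by rw [hsplit]; exact Finset.mem_filter.mpr ⟨hfmem, hb⟩⟩
      · have hg : g ⟨i, hik⟩ = b := by
          rcases Bool.eq_false_or_eq_true b with rfl | rfl <;>
            rcases Bool.eq_false_or_eq_true (f ⟨i, hik⟩) with h1 | h1 <;>
            rcases Bool.eq_false_or_eq_true (g ⟨i, hik⟩) with h2 | h2 <;>
            exact (by decide : ∀ x y z : Bool, x ≠ z → x ≠ y → y = z) _ _ _ hb hnei
        exact ⟨g, by rw [hsplit]; exact Finset.mem_filter.mpr ⟨hgmem, hg⟩⟩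
    -- the parent's count is odd
    have hAodd : Odd (S i p).card := by
      rcases hφ' i hik p with h | h
      · have := Finset.card_pos.mpr ⟨f, hfmem⟩
        omega
      · exact h
    -- each subtree's count is odd
    have hbodd : ∀ b : Bool, Odd (S (i+1) (pb b)).card := by
      intro b
      rcases Nat.lt_or_ge (i+1) k with hik1 | hik1
      · rcases hφ' (i+1) hik1 (pb b) with h | h
        · have := Finset.card_pos.mpr (hmemb b)
          omega
        · exact h
      · -- i + 1 = k : the subtree is a single leaf
        have hik1' : i + 1 = k := le_antisymm hik hik1
        have hle : (S (i+1) (pb b)).card ≤ 1 := by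
          apply Finset.card_le_one.mpr
          intro x hx y hy
          simp only [hS, Finset.mem_filter, Finset.mem_univ, true_and] at hx hy
          funext j
          have hj : (j : ℕ) < i + 1 := by rw [hik1']; exact j.2
          rw [hx.1 j hj, hy.1 j hj]
        have hpos : 1 ≤ (S (i+1) (pb b)).card := Finset.card_pos.mpr (hmemb b)
        have : (S (i+1) (pb b)).card = 1 := le_antisymm hle hpos
        rw [this]; exact odd_one
    have heven : Even (S i p).card := by
      rw [hcard]
      exact (hbodd false).add_odd (hbodd true)
    exact (Nat.not_odd_iff_even.mpr heven) hAodd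
  rw [Finset.card_image_of_injective _ hinj, Finset.card_univ]
  simp
end

section
/- For every k ≥ 1, the strong odd chromatic number of the graph G_k (the binary-tree-to-leaves graph) is at least 2^k + 1. Consequently, there is no function f such that χ_so(G) ≤ f(χ_o(G)) for all graphs G, since χ_o(G_k) ≤ 4 for all k. -/
open Finset

attribute [local instance] Classical.propDecidable

/-- A proper vertex-coloring of a graph. -/
def IsProperColoring {V : Type*} (G : SimpleGraph V) {α : Type*} (φ : V → α) : Prop :=
  ∀ u v : V, G.Adj u v → φ u ≠ φ v

/-- A strong odd coloring. -/
def IsStrongOddColoring {V : Type*} [Fintype V] (G : SimpleGraph V) {t : ℕ}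
    (φ : V → Fin t) : Prop :=
  IsProperColoring G φ ∧ ∀ (v : V) (c : Fin t),
    colorCount G φ v c = 0 ∨ Odd (colorCount G φ v c)

/-- An odd coloring. -/
def IsOddColoring {V : Type*} [Fintype V] (G : SimpleGraph V) {t : ℕ}
    (φ : V → Fin t) : Prop :=
  IsProperColoring G φ ∧ ∀ v : V, (∃ u, G.Adj v u) → ∃ c : Fin t, Odd (colorCount G φ v c)

/-- The strong odd chromatic number. -/
noncomputable def strongOddChromNum {V : Type*} [Fintype V] (G : SimpleGraph V) : ℕ :=
  sInf {t | ∃ φ : V → Fin t, IsStrongOddColoring G φ}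

/-- The odd chromatic number. -/
noncomputable def oddChromNum {V : Type*} [Fintype V] (G : SimpleGraph V) : ℕ :=
  sInf {t | ∃ φ : V → Fin t, IsOddColoring G φ}

/-- Vertices of the full rooted binary tree of height `k`: a vertex at depth `i ≤ k` is a
sequence of `i` bits (the leaves are exactly the vertices at depth `k`). -/
def BTVert (k : ℕ) : Type := Σ i : Fin (k + 1), Fin i → Bool

instance (k : ℕ) : Fintype (BTVert k) := by unfold BTVert; infer_instance

/-- `x` is a strict ancestor of `y` in the binary tree. -/
def isAnc {k : ℕ} (x y : BTVert k) : Prop :=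
  ∃ h : (x.1 : ℕ) < (y.1 : ℕ),
    ∀ (t : ℕ) (ht : t < (x.1 : ℕ)), x.2 ⟨t, ht⟩ = y.2 ⟨t, ht.trans h⟩

/-- The graph `G_k`: on the vertices of the binary tree of height `k`, each leaf is joined
to all of its ancestors. -/
def treeLeafGraph (k : ℕ) : SimpleGraph (BTVert k) where
  Adj x y := ((y.1 : ℕ) = k ∧ (x.1 : ℕ) < k ∧ isAnc x y) ∨
    ((x.1 : ℕ) = k ∧ (y.1 : ℕ) < k ∧ isAnc y x)
  symm := ⟨fun x y h => Or.symm h⟩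
  loopless := ⟨by
    rintro x (⟨_, _, h, _⟩ | ⟨_, _, h, _⟩) <;> exact lt_irrefl _ h⟩

namespace SOC

def step (x : Bool) (t : ℕ) : ℕ :=
  if x then (if t = 2 then 1 else 2) else (if t = 0 then 1 else 0)

def base (t : ℕ) (x : Bool) : ℕ :=
  if x then (if t = 0 then 1 else 2) else (if t = 2 then 1 else 0)

def sigb (t c : ℕ) : ℕ := if t + c = 2 then 0 else 1

def colF : (m : ℕ) → ℕ → (Fin m → Bool) → ℕ
  | 0, _, _ => 0
  | 1, t, b => base t (b ⟨0, one_pos⟩)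
  | (m+2), t, b => colF (m+1) (step (b ⟨0, by omega⟩) t) (fun j => b ⟨j.1+1, by omega⟩)

def typF : (i : ℕ) → ℕ → (Fin i → Bool) → ℕ
  | 0, t, _ => t
  | (i+1), t, f => typF i (step (f ⟨0, by omega⟩) t) (fun j => f ⟨j.1+1, by omega⟩)

lemma step_lt3 (x : Bool) (t : ℕ) : step x t < 3 := by
  unfold step; split_ifs <;> omega

lemma colF_lt3 : ∀ (m t : ℕ), ∀ b, colF m t b < 3
  | 0, t, b => by simp [colF]
  | 1, t, b => by unfold colF base; split_ifs <;> omega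
  | (m+2), t, b => colF_lt3 (m+1) _ _

lemma typF_lt3 : ∀ (i t : ℕ), t < 3 → ∀ f, typF i t f < 3
  | 0, t, ht, f => ht
  | (i+1), t, ht, f => typF_lt3 i _ (step_lt3 _ _) _

lemma colF_succ (n : ℕ) (hn : 1 ≤ n) (t : ℕ) (b : Fin (n+1) → Bool) :
    colF (n+1) t b = colF n (step (b ⟨0, by omega⟩) t) (fun j => b ⟨j.1+1, by omega⟩) := by
  match n with
  | 0 => omega
  | (m+1) => rfl

def mycons {n : ℕ} (x : Bool) (s : Fin n → Bool) : Fin (n+1) → Bool :=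
  fun j => if h : (j : ℕ) = 0 then x else s ⟨j.1 - 1, by omega⟩

noncomputable def cnt (n : ℕ) (P : (Fin n → Bool) → Prop) : ℕ := (univ.filter P).card

def fcast {n n' : ℕ} (h : n = n') (b : Fin n → Bool) : Fin n' → Bool := fun j => b ⟨j, by omega⟩

lemma fcast_fcast {n n' : ℕ} (h : n = n') (h' : n' = n) (b : Fin n → Bool) :
    fcast h' (fcast h b) = b := by
  funext j; simp [fcast]

lemma cnt_cast {n n' : ℕ} (h : n = n') (P : (Fin n → Bool) → Prop) :
    cnt n P = cnt n' (fun s => P (fcast h.symm s)) := by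
  subst h
  have : ∀ s : Fin n → Bool, fcast rfl s = s := fun s => funext fun j => rfl
  simp only [this]

lemma cnt_zero (P : (Fin 0 → Bool) → Prop) (s0 : Fin 0 → Bool) :
    cnt 0 P = if P s0 then 1 else 0 := by
  have hu : (univ : Finset (Fin 0 → Bool)) = {s0} := by
    apply Finset.ext; intro s
    simp only [mem_univ, mem_singleton, true_iff]
    funext j; exact j.elim0
  unfold cnt
  rw [hu, Finset.filter_singleton]
  split_ifs <;> simp

def consEquiv (n : ℕ) : Bool × (Fin n → Bool) ≃ (Fin (n+1) → Bool) where
  toFun p := mycons p.1 p.2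
  invFun b := (b ⟨0, by omega⟩, fun j => b ⟨j.1+1, by omega⟩)
  left_inv p := by
    refine Prod.ext ?_ ?_
    · simp [mycons]
    · funext j; simp only [mycons]; rw [dif_neg (by omega)]
      congr 1
  right_inv b := by
    funext j
    by_cases h : (j : ℕ) = 0
    · simp only [mycons, dif_pos h]; congr 1; exact Fin.ext h.symm
    · simp only [mycons, dif_neg h]; congr 1
      apply Fin.ext; simp only [Fin.val_mk]; omega

lemma cnt_split (n : ℕ) (P : (Fin (n+1) → Bool) → Prop) :
    cnt (n+1) P = cnt n (fun s => P (mycons false s)) + cnt n (fun s => P (mycons true s)) := by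
  unfold cnt
  rw [Finset.card_filter, Finset.card_filter, Finset.card_filter]
  rw [← Fintype.sum_equiv (consEquiv n) (fun p => if P (consEquiv n p) then 1 else 0)
    (fun b => if P b then 1 else 0) (fun p => rfl)]
  rw [Fintype.sum_prod_type, Fintype.sum_bool]
  rw [add_comm]
  rfl

end SOC
namespace SOC

lemma mycons_zero {n : ℕ} (x : Bool) (s : Fin n → Bool) (h : (0:ℕ) < n+1) :
    mycons x s ⟨0, h⟩ = x := by simp [mycons]

lemma mycons_tail {n : ℕ} (x : Bool) (s : Fin n → Bool) :
    (fun j : Fin n => mycons x s ⟨j.1+1, by omega⟩) = s := by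
  funext j; simp only [mycons]; rw [dif_neg (by omega)]
  congr 1

lemma sigb_helper (t c : ℕ) (ht : t < 3) (hc : c < 3) :
    (sigb (step false t) c + sigb (step true t) c) % 2 = sigb t c := by
  interval_cases t <;> interval_cases c <;> simp [sigb, step]

lemma cnt_colF : ∀ (m : ℕ), 1 ≤ m → ∀ (t c : ℕ), t < 3 → c < 3 →
    cnt m (fun b => colF m t b = c) % 2 = sigb t c := by
  intro m
  induction m with
  | zero => omega
  | succ n ih =>
    intro _ t c ht hc
    rcases Nat.eq_zero_or_pos n with hn | hn
    · subst hn
      rw [cnt_split]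
      rw [cnt_zero _ (fun j => false), cnt_zero _ (fun j => false)]
      have h1 : ∀ x : Bool, ∀ s : Fin 0 → Bool, colF 1 t (mycons x s) = base t x := by
        intro x s; show base t (mycons x s ⟨0, one_pos⟩) = base t x
        rw [mycons_zero]
      rw [h1, h1]
      unfold base sigb
      interval_cases t <;> interval_cases c <;> simp
    · rw [cnt_split]
      have key : ∀ x : Bool, ∀ s : Fin n → Bool,
          colF (n+1) t (mycons x s) = colF n (step x t) s := by
        intro x s
        rw [colF_succ n hn, mycons_zero, mycons_tail]
      simp only [key]
      have h0 := ih hn (step false t) c (step_lt3 _ _) hc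
      have h1 := ih hn (step true t) c (step_lt3 _ _) hc
      have h2 := sigb_helper t c ht hc
      omega

lemma colF_cast {n n' : ℕ} (h : n = n') (t : ℕ) (b : Fin n → Bool) :
    colF n t b = colF n' t (fcast h b) := by subst h; rfl

def combine {i m : ℕ} (f : Fin i → Bool) (s : Fin m → Bool) : Fin (i + m) → Bool :=
  fun j => if h : (j : ℕ) < i then f ⟨j, h⟩ else s ⟨j.1 - i, by omega⟩

lemma colF_combine : ∀ (i : ℕ) {m : ℕ}, 1 ≤ m → ∀ (t : ℕ) (f : Fin i → Bool) (s : Fin m → Bool),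
    colF (i + m) t (combine f s) = colF m (typF i t f) s := by
  intro i
  induction i with
  | zero =>
    intro m hm t f s
    have h : 0 + m = m := Nat.zero_add m
    rw [colF_cast h]
    have : fcast h (combine f s) = s := by
      funext j
      show combine f s ⟨j.1, by omega⟩ = s j
      unfold combine
      rw [dif_neg (by omega)]
      exact congrArg s (by apply Fin.ext; simp)
    rw [this]
    rfl
  | succ i ih =>
    intro m hm t f s
    have h : i + 1 + m = (i + m) + 1 := by omega
    rw [colF_cast h, colF_succ (i+m) (by omega)]
    have hb0 : fcast h (combine f s) ⟨0, by omega⟩ = f ⟨0, by omega⟩ := by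
      show combine f s ⟨0, by omega⟩ = _
      unfold combine
      rw [dif_pos (by simp only [Fin.val_mk]; omega)]
    have htail : (fun j : Fin (i+m) => fcast h (combine f s) ⟨j.1+1, by omega⟩)
        = combine (fun j : Fin i => f ⟨j.1+1, by omega⟩) s := by
      funext j
      show combine f s ⟨j.1+1, by omega⟩ = _
      unfold combine
      by_cases hj : (j : ℕ) < i
      · rw [dif_pos (by simp only [Fin.val_mk]; omega), dif_pos hj]
      · rw [dif_neg (by simp only [Fin.val_mk]; omega), dif_neg hj]
        congr 1
        apply Fin.ext
        simp only [Fin.val_mk]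
        omega
    rw [hb0, htail, ih hm]
    rfl

end SOC
namespace SOC

def leafOf {k d : ℕ} (hd : d ≤ k) (f : Fin d → Bool) (s : Fin (k - d) → Bool) : BTVert k :=
  ⟨⟨k, by omega⟩, fcast (show d + (k - d) = k by omega) (combine f s)⟩

def sufOf {k : ℕ} (d : ℕ) (u : BTVert k) : Fin (k - d) → Bool :=
  fun jj => if h : (d + jj : ℕ) < (u.1 : ℕ) then u.2 ⟨d + jj, h⟩ else false

lemma countA {k d : ℕ} (hd : d < k) {hi : d < k + 1} (f : Fin d → Bool) {α : Type*}
    (φ : BTVert k → α) (c : α) :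
    colorCount (treeLeafGraph k) φ ⟨⟨d, hi⟩, f⟩ c
      = cnt (k - d) (fun s => φ (leafOf hd.le f s) = c) := by
  classical
  unfold colorCount cnt
  symm
  have hmem : ∀ u : BTVert k,
      (treeLeafGraph k).Adj ⟨⟨d, by omega⟩, f⟩ u → leafOf hd.le f (sufOf d u) = u := by
    rintro ⟨⟨u1, hu1⟩, u2⟩ hadj
    obtain ⟨h1, h2, h3⟩ | ⟨h1, h2, h3⟩ := hadj
    · simp only [Fin.val_mk] at h1
      obtain ⟨ha, hanc⟩ := h3
      simp only [Fin.val_mk] at ha hanc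
      subst h1
      unfold leafOf
      apply congrArg (fun g => (⟨⟨u1, hu1⟩, g⟩ : BTVert _))
      funext jj
      show combine f (sufOf d _) ⟨jj.1, by omega⟩ = u2 jj
      unfold combine
      by_cases hjj : (jj : ℕ) < d
      · rw [dif_pos (by simp only [Fin.val_mk]; omega)]
        refine (hanc jj.1 hjj).trans (congrArg u2 (Fin.ext ?_))
        simp only [Fin.val_mk]
      · rw [dif_neg (by simp only [Fin.val_mk]; omega)]
        unfold sufOf
        rw [dif_pos (by simp only [Fin.val_mk]; omega)]
        refine congrArg u2 (Fin.ext ?_)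
        simp only [Fin.val_mk]
        omega
    · exfalso
      simp only [Fin.val_mk] at h1
      omega
  apply Finset.card_nbij' (leafOf hd.le f) (sufOf d)
  · intro s hs
    simp only [Finset.mem_coe, Finset.mem_filter, Finset.mem_univ, true_and] at hs ⊢
    refine ⟨Or.inl ⟨rfl, by simp only [Fin.val_mk]; omega, ?_⟩, hs⟩
    refine ⟨by simp only [leafOf, Fin.val_mk]; omega, ?_⟩
    intro t ht
    simp only [Fin.val_mk] at ht ⊢
    show f ⟨t, ht⟩ = combine f s ⟨t, by omega⟩
    unfold combine
    rw [dif_pos (by simp only [Fin.val_mk]; omega)]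
  · intro u hu
    simp only [Finset.mem_coe, Finset.mem_filter, Finset.mem_univ, true_and] at hu ⊢
    exact (congrArg φ (hmem u hu.1)).trans hu.2
  · intro s hs
    funext jj
    unfold sufOf leafOf
    rw [dif_pos (by simp only [Fin.val_mk]; omega)]
    show combine f s ⟨d + jj.1, by omega⟩ = s jj
    unfold combine
    rw [dif_neg (by simp only [Fin.val_mk]; omega)]
    refine congrArg s (Fin.ext ?_)
    simp only [Fin.val_mk]
    omega
  · intro u hu
    simp only [Finset.mem_coe, Finset.mem_filter, Finset.mem_univ, true_and] at hu
    exact hmem u hu.1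

end SOC
namespace SOC

lemma card_filter_ext {β : Type*} [Fintype β] {P Q : β → Prop} {h1 : DecidablePred P}
    {h2 : DecidablePred Q} (h : ∀ b, P b ↔ Q b) :
    (@Finset.filter β P h1 Finset.univ).card = (@Finset.filter β Q h2 Finset.univ).card := by
  apply Finset.card_nbij' id id
  · intro a ha
    simp only [Finset.mem_coe, Finset.mem_filter, Finset.mem_univ, true_and, id] at *
    exact (h a).1 ha
  · intro a ha
    simp only [Finset.mem_coe, Finset.mem_filter, Finset.mem_univ, true_and, id] at *
    exact (h a).2 ha
  · intro a _; rfl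
  · intro a _; rfl

def extendF {d : ℕ} (f : Fin d → Bool) (x : Bool) : Fin (d+1) → Bool :=
  fun j => if h : (j : ℕ) < d then f ⟨j, h⟩ else x

lemma fcast_trans {n n' n'' : ℕ} (h : n = n') (h' : n' = n'') (b : Fin n → Bool) :
    fcast h' (fcast h b) = fcast (h.trans h') b := rfl

lemma leafOf_mycons {k d : ℕ} (hd : d < k) (hd' : d ≤ k) (hd1 : d + 1 ≤ k)
    (h : k - d = (k - (d+1)) + 1) (f : Fin d → Bool) (x : Bool) (s : Fin (k - (d+1)) → Bool) :
    leafOf hd' f (fcast h.symm (mycons x s)) = leafOf hd1 (extendF f x) s := by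
  unfold leafOf
  refine Sigma.ext rfl (heq_of_eq (funext fun j => ?_))
  show combine f (fcast h.symm (mycons x s)) ⟨j.1, by omega⟩
      = combine (extendF f x) s ⟨j.1, by omega⟩
  unfold combine
  rcases Nat.lt_trichotomy (j : ℕ) d with hj | hj | hj
  · rw [dif_pos (by simp only [Fin.val_mk]; omega), dif_pos (by simp only [Fin.val_mk]; omega)]
    unfold extendF
    rw [dif_pos (by simp only [Fin.val_mk]; omega)]
  · rw [dif_neg (by simp only [Fin.val_mk]; omega), dif_pos (by simp only [Fin.val_mk]; omega)]
    unfold extendF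
    rw [dif_neg (by simp only [Fin.val_mk]; omega)]
    show mycons x s ⟨_, _⟩ = x
    unfold mycons
    rw [dif_pos (by simp only [Fin.val_mk]; omega)]
  · rw [dif_neg (by simp only [Fin.val_mk]; omega), dif_neg (by simp only [Fin.val_mk]; omega)]
    show mycons x s ⟨_, _⟩ = s _
    unfold mycons
    rw [dif_neg (by simp only [Fin.val_mk]; omega)]
    refine congrArg s (Fin.ext ?_)
    simp only [Fin.val_mk]
    omega

lemma cnt_leaf_split {k d : ℕ} (hd : d < k) (hd' : d ≤ k) (hd1 : d + 1 ≤ k)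
    (f : Fin d → Bool) {α : Type*} (φ : BTVert k → α) (c : α) :
    cnt (k - d) (fun s => φ (leafOf hd' f s) = c)
      = cnt (k - (d+1)) (fun s => φ (leafOf hd1 (extendF f false) s) = c)
      + cnt (k - (d+1)) (fun s => φ (leafOf hd1 (extendF f true) s) = c) := by
  have h : k - d = (k - (d+1)) + 1 := by omega
  rw [cnt_cast h, cnt_split]
  congr 1
  · apply congrArg (cnt _)
    funext s
    rw [leafOf_mycons hd hd' hd1 h]
  · apply congrArg (cnt _)
    funext s
    rw [leafOf_mycons hd hd' hd1 h]

lemma leafcnt_le_one {k t : ℕ} (φ : BTVert k → Fin t)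
    (hφ : IsStrongOddColoring (treeLeafGraph k) φ) :
    ∀ (n d : ℕ) (hdn : d + n = k) (f : Fin d → Bool) (c : Fin t),
      cnt (k - d) (fun s => φ (leafOf (by omega) f s) = c) ≤ 1 := by
  intro n
  induction n with
  | zero =>
    intro d hdn f c
    have h0 : k - d = 0 := by omega
    rw [cnt_cast h0, cnt_zero _ (fun j => j.elim0)]
    split_ifs <;> omega
  | succ n ih =>
    intro d hdn f c
    have hd : d < k := by omega
    have hsplit := cnt_leaf_split hd (by omega) (by omega) f φ c
    have h0 := ih (d+1) (by omega) (extendF f false) c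
    have h1 := ih (d+1) (by omega) (extendF f true) c
    have hcc := (countA hd (hi := by omega) f φ c).symm
    have hodd := hφ.2 ⟨⟨d, by omega⟩, f⟩ c
    rw [← hcc] at hodd
    rcases hodd with h | h
    · omega
    · rw [Nat.odd_iff] at h
      omega

lemma part1_bound {k t : ℕ} (hk : 1 ≤ k) (φ : BTVert k → Fin t)
    (hφ : IsStrongOddColoring (treeLeafGraph k) φ) : 2 ^ k + 1 ≤ t := by
  classical
  set f0 : Fin 0 → Bool := fun j => j.elim0 with hf0
  set N : Fin t → ℕ := fun c => cnt (k - 0) (fun s => φ (leafOf (by omega) f0 s) = c) with hN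
  have hle : ∀ c, N c ≤ 1 := fun c => leafcnt_le_one φ hφ k 0 (by omega) f0 c
  have hsum : ∑ c : Fin t, N c = 2 ^ (k - 0) := by
    simp only [hN]
    unfold cnt
    have hfib := Finset.card_eq_sum_card_fiberwise
      (f := fun s : Fin (k-0) → Bool => φ (leafOf (Nat.zero_le k) f0 s)) (s := univ) (t := univ)
      (fun s _ => Finset.mem_univ _)
    rw [Finset.card_univ, Fintype.card_fun, Fintype.card_fin, Fintype.card_bool] at hfib
    exact (Finset.sum_congr rfl (fun c _ => card_filter_ext (fun b => Iff.rfl))).trans hfib.symm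
  set c0 : Fin t := φ ⟨⟨0, by omega⟩, f0⟩ with hc0
  have hN0 : N c0 = 0 := by
    simp only [hN]
    unfold cnt
    refine Finset.card_eq_zero.mpr (Finset.eq_empty_iff_forall_notMem.mpr ?_)
    intro s hs
    simp only [Finset.mem_filter] at hs
    obtain ⟨-, he⟩ := hs
    revert he
    have hadj : (treeLeafGraph k).Adj ⟨⟨0, by omega⟩, f0⟩ (leafOf (Nat.zero_le k) f0 s) :=
      Or.inl ⟨rfl, hk, ⟨hk, fun tt htt => absurd htt (Nat.not_lt_zero tt)⟩⟩
    exact fun he => hφ.1 _ _ hadj he.symm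

  have htpos : 0 < t := c0.pos
  have hsum2 : ∑ c : Fin t, N c = N c0 + ∑ c ∈ univ.erase c0, N c := by
    rw [add_comm, Finset.sum_erase_add _ _ (Finset.mem_univ c0)]
  have hbound : ∑ c ∈ univ.erase c0, N c ≤ t - 1 := by
    calc ∑ c ∈ univ.erase c0, N c ≤ ∑ c ∈ univ.erase c0, 1 := Finset.sum_le_sum (fun c _ => hle c)
    _ = (univ.erase c0).card := by rw [Finset.sum_const, smul_eq_mul, mul_one]
    _ = t - 1 := by rw [Finset.card_erase_of_mem (Finset.mem_univ c0), Finset.card_univ,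
        Fintype.card_fin]
  have h2k : 2 ^ (k - 0) = 2 ^ k := by norm_num
  have hlt : 0 < 2 ^ k := Nat.two_pow_pos k
  omega

end SOC
namespace SOC

lemma strongOdd_exists (k : ℕ) :
    ∃ φ : BTVert k → Fin (Fintype.card (BTVert k)), IsStrongOddColoring (treeLeafGraph k) φ := by
  refine ⟨fun v => Fintype.equivFin (BTVert k) v, ?_, ?_⟩
  · intro u v h he
    exact h.ne ((Fintype.equivFin (BTVert k)).injective he)
  · intro v c
    have hle : colorCount (treeLeafGraph k) (fun v => Fintype.equivFin (BTVert k) v) v c ≤ 1 := by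
      unfold colorCount
      apply Finset.card_le_one.mpr
      intro a ha b hb
      simp only [Finset.mem_filter] at ha hb
      exact (Fintype.equivFin (BTVert k)).injective (ha.2.2.trans hb.2.2.symm)
    rcases Nat.le_one_iff_eq_zero_or_eq_one.mp hle with h | h
    · exact Or.inl h
    · exact Or.inr (h ▸ odd_one)

lemma part1 : ∀ k : ℕ, 1 ≤ k → 2 ^ k + 1 ≤ strongOddChromNum (treeLeafGraph k) := by
  intro k hk
  have hne : {t | ∃ φ : BTVert k → Fin t, IsStrongOddColoring (treeLeafGraph k) φ}.Nonempty :=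
    ⟨_, strongOdd_exists k⟩
  obtain ⟨φ, hφ⟩ := Nat.sInf_mem hne
  exact part1_bound hk φ hφ

def phiv {k : ℕ} (v : BTVert k) : ℕ :=
  if h : (v.1 : ℕ) = k then 2 + colF k 0 (fcast h v.2) else if (v.1 : ℕ) = 0 then 0 else 1

lemma phiv_lt5 {k : ℕ} (v : BTVert k) : phiv v < 5 := by
  unfold phiv
  split_ifs with h1 h2
  · have := colF_lt3 k 0 (fcast h1 v.2); omega
  · omega
  · omega

noncomputable def phi {k : ℕ} (v : BTVert k) : Fin 5 := ⟨phiv v, phiv_lt5 v⟩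

lemma phiv_leaf_ge2 {k : ℕ} (v : BTVert k) (h : (v.1 : ℕ) = k) : 2 ≤ phiv v := by
  unfold phiv; rw [dif_pos h]; omega

lemma phiv_int {k : ℕ} (v : BTVert k) (h : (v.1 : ℕ) < k) :
    ((v.1 : ℕ) = 0 ∧ phiv v = 0) ∨ ((v.1 : ℕ) ≠ 0 ∧ phiv v = 1) := by
  unfold phiv
  split_ifs with h1 h2
  · omega
  · exact Or.inl ⟨h2, rfl⟩
  · exact Or.inr ⟨h2, rfl⟩

lemma phiv_leafOf {k d : ℕ} (hd : d < k) (hd' : d ≤ k) (f : Fin d → Bool)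
    (s : Fin (k - d) → Bool) :
    phiv (leafOf hd' f s) = 2 + colF (k - d) (typF d 0 f) s := by
  unfold phiv leafOf
  rw [dif_pos rfl]
  congr 1
  rw [fcast_trans]
  have h2 : d + (k - d) = k := by omega
  rw [← colF_cast ((show d + (k-d) = k by omega).trans rfl)]
  exact colF_combine d (by omega) 0 f s

lemma odd_exists {k : ℕ} (hk : 1 ≤ k) :
    ∃ φ : BTVert k → Fin 5, IsOddColoring (treeLeafGraph k) φ := by
  refine ⟨phi, ?_, ?_⟩
  · -- proper
    intro u v hadj he
    have hv : phiv u = phiv v := congrArg Fin.val he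
    obtain ⟨h1, h2, h3⟩ | ⟨h1, h2, h3⟩ := hadj
    · have := phiv_leaf_ge2 v h1
      rcases phiv_int u h2 with ⟨_, h⟩ | ⟨_, h⟩ <;> omega
    · have := phiv_leaf_ge2 u h1
      rcases phiv_int v h2 with ⟨_, h⟩ | ⟨_, h⟩ <;> omega
  · rintro ⟨⟨i, hi⟩, f⟩ -
    by_cases hik : i = k
    · -- leaf: the root color 0 appears exactly once
      refine ⟨⟨0, by omega⟩, ?_⟩
      unfold colorCount
      have hodd1 : Odd ({(⟨⟨0, by omega⟩, fun _ => false⟩ : BTVert k)} :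
          Finset (BTVert k)).card := by
        exact ⟨0, Finset.card_singleton _⟩
      convert hodd1 using 2
      apply Finset.ext
      intro u
      simp only [Finset.mem_filter, Finset.mem_univ, true_and, Finset.mem_singleton]
      constructor
      · rintro ⟨hadj, hcol⟩
        obtain ⟨h1, h2, h3⟩ | ⟨h1, h2, h3⟩ := hadj
        · exfalso
          simp only [Fin.val_mk] at h2
          omega
        · have hval : phiv u = 0 := congrArg Fin.val hcol
          have hu0 : (u.1 : ℕ) = 0 := by
            rcases phiv_int u h2 with ⟨h', _⟩ | ⟨h', h''⟩
            · exact h'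
            · omega
          obtain ⟨⟨u1, hu1⟩, u2⟩ := u
          simp only [Fin.val_mk] at hu0
          subst hu0
          exact Finset.mem_singleton.mpr (congrArg (fun g : Fin 0 → Bool => (⟨⟨0, by omega⟩, g⟩ : BTVert k))
            (funext fun j => j.elim0))
      · intro hu; obtain rfl := Finset.mem_singleton.mp hu
        constructor
        · refine Or.inr ⟨hik, hk, ⟨show (0:ℕ) < i by omega,
            fun tt htt => absurd htt (Nat.not_lt_zero tt)⟩⟩
        · apply Fin.ext
          show phiv _ = 0
          rcases phiv_int (⟨⟨0, by omega⟩, fun _ => false⟩ : BTVert k) (by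
            simp only [Fin.val_mk]; omega) with ⟨_, h⟩ | ⟨h, _⟩
          · exact h
          · exact absurd rfl h
    · -- internal node
      have hik' : i < k := by omega
      set T := typF i 0 f with hT
      have hT3 : T < 3 := typF_lt3 i 0 (by omega) f
      set c' := if T = 2 then 1 else 0 with hc'
      have hc'3 : c' < 3 := by rw [hc']; split_ifs <;> omega
      refine ⟨⟨2 + c', by omega⟩, ?_⟩
      have hA := countA hik' (hi := hi) f phi (⟨2 + c', by omega⟩ : Fin 5)
      rw [hA]
      have hpt : ∀ s : Fin (k - i) → Bool,
          (phi (leafOf hik'.le f s) = (⟨2 + c', by omega⟩ : Fin 5)) ↔ (colF (k - i) T s = c') := by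
        intro s
        rw [Fin.ext_iff]
        show phiv (leafOf hik'.le f s) = 2 + c' ↔ _
        rw [phiv_leafOf hik' hik'.le f s, ← hT]
        omega
      have : cnt (k - i) (fun s => phi (leafOf hik'.le f s) = (⟨2 + c', by omega⟩ : Fin 5))
          = cnt (k - i) (fun s => colF (k - i) T s = c') := by
        unfold cnt
        exact card_filter_ext hpt
      rw [this]
      rw [Nat.odd_iff]
      rw [cnt_colF (k - i) (by omega) T c' hT3 hc'3]
      rw [hc']
      unfold sigb
      split_ifs <;> omega

lemma odd_le5 {k : ℕ} (hk : 1 ≤ k) : oddChromNum (treeLeafGraph k) ≤ 5 := by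
  obtain ⟨φ, hφ⟩ := odd_exists hk
  exact Nat.sInf_le ⟨φ, hφ⟩

end SOC

/-- For every `k ≥ 1` the strong odd chromatic number of `G_k` is at least `2^k + 1`;
consequently there is no function `f` with `χ_so(G) ≤ f(χ_o(G))` for all graphs `G`. -/
theorem strongOddChromNum_treeLeafGraph :
    (∀ k : ℕ, 1 ≤ k → 2 ^ k + 1 ≤ strongOddChromNum (treeLeafGraph k)) ∧
    ¬ ∃ f : ℕ → ℕ, ∀ (V : Type) [Fintype V] (G : SimpleGraph V),
        strongOddChromNum G ≤ f (oddChromNum G) := by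
  constructor
  · exact SOC.part1
  · rintro ⟨f, hf⟩
    set M := (Finset.range 6).sup f with hM
    set k := M + 1 with hk
    have h1 := SOC.part1 k (by omega)
    have h2 := hf (BTVert k) (treeLeafGraph k)
    have h3 : oddChromNum (treeLeafGraph k) ≤ 5 := SOC.odd_le5 (by omega)
    have h4 : f (oddChromNum (treeLeafGraph k)) ≤ M :=
      Finset.le_sup (Finset.mem_range.mpr (by omega))
    have h5 : k < 2 ^ k := Nat.lt_two_pow_self
    omega
end
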